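/- arXiv:2306.03846 — 4 statements merged into one kernel-verified Lean document; each statement's English description precedes it below -/
import Mathlib

section
/- Let G be a group acting on the real line by orientation-preserving homeomorphisms. If h : ℝ → ℝ is an orientation-reversing homeomorphism (i.e., a strictly decreasing continuous bijection) that commutes with the action of every element of G, then the unique fixed point of h is fixed by every element of G. In particular, the action of G has a global fixed point. -/
/-- If a group `G` acts on `ℝ` by orientation-preserving homeomorphisms and
`h : ℝ → ℝ` is an orientation-reversing homeomorphism (strictly decreasing
continuous bijection) commuting with the action of every element of `G`, then
the unique fixed point of `h` is fixed by every element of `G`; in particular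
the action has a global fixed point. -/
theorem stmt_0 (G : Type*) [Group G] (ρ : G →* Equiv.Perm ℝ)
    (hρmono : ∀ g : G, StrictMono ⇑(ρ g))
    (hρcont : ∀ g : G, Continuous ⇑(ρ g))
    (h : ℝ → ℝ) (hanti : StrictAnti h) (hcont : Continuous h)
    (hbij : Function.Bijective h)
    (hcomm : ∀ (g : G) (x : ℝ), h (ρ g x) = ρ g (h x)) :
    ∃ x : ℝ, h x = x ∧ (∀ y : ℝ, h y = y → y = x) ∧ ∀ g : G, ρ g x = x := by
  -- f x = h x - x is strictly decreasing and continuous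
  set f : ℝ → ℝ := fun x => h x - x with hf
  have hfanti : StrictAnti f := fun a b hab => by
    have := hanti hab
    dsimp [f]; linarith
  have hfcont : Continuous f := hcont.sub continuous_id
  -- existence of a fixed point
  have hex : ∃ x : ℝ, h x = x := by
    rcases lt_trichotomy (h 0) 0 with hc | hc | hc
    · -- f 0 < 0, f (h 0) > 0 since h (h 0) > h 0
      have h1 : f 0 < 0 := by simp [f, hc]
      have h2 : 0 < f (h 0) := by
        have := hanti hc
        dsimp [f]; linarith
      have : (0 : ℝ) ∈ f '' Set.Icc (h 0) 0 := by
        apply intermediate_value_Icc' hc.le hfcont.continuousOn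
        constructor <;> linarith
      rcases this with ⟨x, _, hx⟩
      exact ⟨x, by dsimp [f] at hx; linarith⟩
    · exact ⟨0, hc⟩
    · have h1 : 0 < f 0 := by simp [f, hc]
      have h2 : f (h 0) < 0 := by
        have := hanti hc
        dsimp [f]; linarith
      have : (0 : ℝ) ∈ f '' Set.Icc 0 (h 0) := by
        apply intermediate_value_Icc' hc.le hfcont.continuousOn
        constructor <;> linarith
      rcases this with ⟨x, _, hx⟩
      exact ⟨x, by dsimp [f] at hx; linarith⟩
  obtain ⟨x, hx⟩ := hex
  have huniq : ∀ y : ℝ, h y = y → y = x := by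
    intro y hy
    have : f y = f x := by dsimp [f]; rw [hy, hx]; ring
    exact hfanti.injective this
  exact ⟨x, hx, huniq, fun g => huniq _ (by rw [hcomm g x, hx])⟩
end

section
/- Let X be a set, φ : X → X a bijection, and σ : X → X a bijection with σ² = id and σ ∘ φ ∘ σ = φ⁻¹. If for every x ∈ X one has σ(x) ≠ x and σ(x) ≠ φ(x), then for every n ∈ ℤ and every x ∈ X, φⁿ ∘ σ has no fixed point; i.e., every element of order 2 in the infinite dihedral group generated by φ and σ acts on X without fixed points. -/
/-- Let `φ, σ` be bijections of a set `X` with `σ² = id` and `σφσ = φ⁻¹`.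
If `σ x ≠ x` and `σ x ≠ φ x` for every `x`, then for every `n : ℤ` the map
`φⁿ ∘ σ` has no fixed point; i.e. every element of order 2 of the infinite
dihedral group generated by `φ` and `σ` acts on `X` without fixed points. -/
theorem stmt_2 (X : Type*) (φ σ : Equiv.Perm X)
    (hσ : σ * σ = 1) (hrev : σ * φ * σ = φ⁻¹)
    (hfree : ∀ x : X, σ x ≠ x ∧ σ x ≠ φ x) :
    ∀ (n : ℤ) (x : X), (φ ^ n) (σ x) ≠ x := by
  have hσinv : σ⁻¹ = σ := inv_eq_of_mul_eq_one_right hσ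
  have hconj : σ * φ * σ⁻¹ = φ⁻¹ := by rw [hσinv]; exact hrev
  have key : ∀ k : ℤ, σ * φ ^ k = φ ^ (-k) * σ := by
    intro k
    have h2 : σ * φ ^ k * σ⁻¹ = φ ^ (-k) := by
      rw [← conj_zpow, hconj, inv_zpow, ← zpow_neg]
    calc σ * φ ^ k = (σ * φ ^ k * σ⁻¹) * σ := by group
    _ = φ ^ (-k) * σ := by rw [h2]
  have happ : ∀ (k : ℤ) (y : X), σ ((φ ^ k) y) = (φ ^ (-k)) (σ y) := by
    intro k y
    have := congrArg (fun (g : Equiv.Perm X) => g y) (key k)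
    simpa [Equiv.Perm.mul_apply] using this
  intro n x h
  rcases Int.even_or_odd n with ⟨m, hm⟩ | ⟨m, hm⟩
  · -- n = m + m
    have h2 : (φ ^ m) (σ x) = (φ ^ (-m)) x := by
      have := congrArg (φ ^ (-m)) h
      rw [← Equiv.Perm.mul_apply, ← zpow_add, hm] at this
      have e : -m + (m + m) = m := by ring
      rwa [e] at this
    refine (hfree ((φ ^ (-m)) x)).1 ?_
    rw [happ, neg_neg, h2]
  · -- n = 2*m + 1
    have h2 : (φ ^ (m + 1)) (σ x) = (φ ^ (-m)) x := by
      have := congrArg (φ ^ (-m)) h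
      rw [← Equiv.Perm.mul_apply, ← zpow_add, hm] at this
      have e : -m + (2 * m + 1) = m + 1 := by ring
      rwa [e] at this
    refine (hfree ((φ ^ (-(m + 1))) x)).2 ?_
    rw [happ, neg_neg, h2]
    have : φ ((φ ^ (-(m + 1))) x) = (φ ^ (-m)) x := by
      rw [show φ ((φ ^ (-(m + 1))) x) = (φ ^ (1 : ℤ) * φ ^ (-(m + 1))) x from by
        simp [Equiv.Perm.mul_apply], ← zpow_add]
      norm_num
    rw [this]
end

section
/- Let G and H be subgroups of the group of orientation-preserving homeomorphisms of ℝ that commute elementwise (every element of G commutes with every element of H). Let I be a connected component of the support of G (the set of points moved by some element of G) and J a connected component of the support of H. Then I and J are not linked: either their interiors are disjoint, or one is contained in the other, or they are equal. -/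
open Set Filter Topology

private def psupp (G : Subgroup (Equiv.Perm ℝ)) : Set ℝ :=
  {p : ℝ | ∃ g ∈ G, (g : Equiv.Perm ℝ) p ≠ p}

private lemma perm_continuous (g : Equiv.Perm ℝ) (hg : StrictMono ⇑g) : Continuous ⇑g := by
  have h := OrderIso.continuous (StrictMono.orderIsoOfSurjective ⇑g hg g.surjective)
  rwa [StrictMono.coe_orderIsoOfSurjective] at h

private lemma psupp_open (G : Subgroup (Equiv.Perm ℝ))
    (hG : ∀ g ∈ G, StrictMono ⇑(g : Equiv.Perm ℝ)) : IsOpen (psupp G) := by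
  have : psupp G = ⋃ g ∈ G, {p : ℝ | (g : Equiv.Perm ℝ) p ≠ p} := by
    ext p; simp [psupp]
  rw [this]
  exact isOpen_biUnion fun g hg => isOpen_ne_fun (perm_continuous g (hG g hg)) continuous_id

/-- A point in the closure of a connected component of an open set, but not in the
component, is not in the set. -/
private lemma boundary_notMem {U : Set ℝ} (hU : IsOpen U) {x q : ℝ}
    (hq : q ∈ closure (connectedComponentIn U x)) (hq' : q ∉ connectedComponentIn U x) :
    q ∉ U := by
  intro hqU
  have hD : IsOpen (connectedComponentIn U q) := hU.connectedComponentIn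
  have hqD : q ∈ connectedComponentIn U q := mem_connectedComponentIn hqU
  obtain ⟨p, hp1, hp2⟩ := mem_closure_iff.mp hq _ hD hqD
  have e1 : connectedComponentIn U q = connectedComponentIn U p := connectedComponentIn_eq hp1
  have e2 : connectedComponentIn U x = connectedComponentIn U p := connectedComponentIn_eq hp2
  exact hq' (by rw [e2, ← e1]; exact hqD)

/-- Elements of `H` preserve the complement of the support of `G`. -/
private lemma mapsCompl {G H : Subgroup (Equiv.Perm ℝ)}
    (hcomm : ∀ g ∈ G, ∀ h ∈ H, Commute g h)
    {h : Equiv.Perm ℝ} (hh : h ∈ H) {p : ℝ} (hp : p ∉ psupp G) :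
    h p ∉ psupp G := by
  rintro ⟨g, hg, hne⟩
  have h2 : g p = p := by
    by_contra hc; exact hp ⟨g, hg, hc⟩
  have h1 : g (h p) = h (g p) := by
    have := congrArg (fun e : Equiv.Perm ℝ => e p) (hcomm g hg h hh)
    simpa [Equiv.Perm.mul_apply] using this
  exact hne (by rw [h1, h2])

/-- The key asymmetric configuration lemma: `u ∈ I \ J`, `z ∈ I ∩ J`, `v ∈ J \ I`
with `u < z < v` is impossible. -/
private lemma key {G H : Subgroup (Equiv.Perm ℝ)}
    (hG : ∀ g ∈ G, StrictMono ⇑(g : Equiv.Perm ℝ))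
    (hH : ∀ h ∈ H, StrictMono ⇑(h : Equiv.Perm ℝ))
    (hcomm : ∀ g ∈ G, ∀ h ∈ H, Commute g h)
    {x y : ℝ} {I J : Set ℝ}
    (hI : I = connectedComponentIn (psupp G) x)
    (hJ : J = connectedComponentIn (psupp H) y)
    {u z v : ℝ} (hu : u ∈ I \ J) (hz : z ∈ I ∩ J) (hv : v ∈ J \ I)
    (huz : u < z) (hzv : z < v) : False := by
  subst hI; subst hJ
  set I := connectedComponentIn (psupp G) x with hI
  set J := connectedComponentIn (psupp H) y with hJ
  have hGopen := psupp_open G hG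
  have hHopen := psupp_open H hH
  have hIopen : IsOpen I := hI ▸ hGopen.connectedComponentIn
  have hJopen : IsOpen J := hJ ▸ hHopen.connectedComponentIn
  have hIconn : IsPreconnected I := by
    rw [hI]; exact (isPreconnected_connectedComponentIn)
  have hJconn : IsPreconnected J := by
    rw [hJ]; exact (isPreconnected_connectedComponentIn)
  have hIord : OrdConnected I := hIconn.ordConnected
  have hJord : OrdConnected J := hJconn.ordConnected
  -- define b := sSup (I ∩ Icc z v)
  set S : Set ℝ := I ∩ Icc z v with hS
  have hzS : z ∈ S := ⟨hz.1, le_refl z, hzv.le⟩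
  have hSne : S.Nonempty := ⟨z, hzS⟩
  have hSbdd : BddAbove S := ⟨v, fun t ht => ht.2.2⟩
  set b : ℝ := sSup S with hb
  have hzb : z ≤ b := le_csSup hSbdd hzS
  have hbv : b ≤ v := csSup_le hSne fun t ht => ht.2.2
  have hzb' : z < b := by
    have h1 : ∀ᶠ t in 𝓝[>] z, t ∈ I :=
      eventually_nhdsWithin_of_eventually_nhds (hIopen.eventually_mem hz.1)
    have h2 : Ioo z v ∈ 𝓝[>] z := Ioo_mem_nhdsGT_of_mem ⟨le_refl z, hzv⟩
    obtain ⟨t, htI, htzv⟩ := (h1.and (eventually_of_mem h2 fun _ ht => ht)).exists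
    exact lt_of_lt_of_le htzv.1 (le_csSup hSbdd ⟨htI, htzv.1.le, htzv.2.le⟩)
  have hbI : b ∉ I := by
    intro hbI
    have hbv' : b < v := lt_of_le_of_ne hbv (fun h => hv.2 (by rw [← h]; exact hbI))
    have h1 : ∀ᶠ t in 𝓝[>] b, t ∈ I :=
      eventually_nhdsWithin_of_eventually_nhds (hIopen.eventually_mem hbI)
    have h2 : Ioo b v ∈ 𝓝[>] b := Ioo_mem_nhdsGT_of_mem ⟨le_refl b, hbv'⟩
    obtain ⟨t, htI, htbv⟩ := (h1.and (eventually_of_mem h2 fun _ ht => ht)).exists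
    exact absurd (le_csSup hSbdd ⟨htI, hzb.trans htbv.1.le, htbv.2.le⟩) (not_le.mpr htbv.1)
  have hIcob : Ico z b ⊆ I := by
    intro t ht
    obtain ⟨s, hsS, hts⟩ := exists_lt_of_lt_csSup hSne ht.2
    exact hIord.out hz.1 hsS.1 ⟨ht.1, hts.le⟩
  have hbclI : b ∈ closure I :=
    closure_mono (inter_subset_left) (csSup_mem_closure hSne hSbdd)
  have hbSG : b ∉ psupp G := boundary_notMem hGopen hbclI hbI
  have hbJ : b ∈ J := hJord.out hz.2 hv.1 ⟨hzb, hbv⟩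
  -- define c := sInf (J ∩ Icc u z)
  set T : Set ℝ := J ∩ Icc u z with hT
  have hzT : z ∈ T := ⟨hz.2, huz.le, le_refl z⟩
  have hTne : T.Nonempty := ⟨z, hzT⟩
  have hTbdd : BddBelow T := ⟨u, fun t ht => ht.2.1⟩
  set c : ℝ := sInf T with hc
  have hcz : c ≤ z := csInf_le hTbdd hzT
  have huc : u ≤ c := le_csInf hTne fun t ht => ht.2.1
  have hcJ : c ∉ J := by
    intro hcJ
    have huc' : u < c := lt_of_le_of_ne huc (fun h => hu.2 (by rw [h]; exact hcJ))
    have h1 : ∀ᶠ t in 𝓝[<] c, t ∈ J :=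
      eventually_nhdsWithin_of_eventually_nhds (hJopen.eventually_mem hcJ)
    have h2 : Ioo u c ∈ 𝓝[<] c := Ioo_mem_nhdsLT_of_mem ⟨huc', le_refl c⟩
    obtain ⟨t, htJ, htuc⟩ := (h1.and (eventually_of_mem h2 fun _ ht => ht)).exists
    exact absurd (csInf_le hTbdd ⟨htJ, htuc.1.le, htuc.2.le.trans hcz⟩) (not_le.mpr htuc.2)
  have hcclJ : c ∈ closure J :=
    closure_mono (inter_subset_left) (csInf_mem_closure hTne hTbdd)
  have hcSH : c ∉ psupp H := boundary_notMem hHopen hcclJ hcJ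
  have hcI : c ∈ I := hIord.out hu.1 hz.1 ⟨huc, hcz⟩
  have hcb : c < b := lt_of_le_of_lt hcz hzb'
  -- the interval (c, b) lies inside I
  have hIoo : Ioo c b ⊆ I := by
    intro t ht
    rcases le_or_gt t z with h | h
    · exact hIord.out hcI hz.1 ⟨ht.1.le, h⟩
    · exact hIcob ⟨h.le, ht.2⟩
  -- get h ∈ H moving b
  have hbSH : b ∈ psupp H := by
    have : J ⊆ psupp H := by rw [hJ]; exact connectedComponentIn_subset _ _
    exact this hbJ
  obtain ⟨h, hh, hhb⟩ := hbSH
  have hhc : h c = c := by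
    by_contra hc'
    exact hcSH ⟨h, hh, hc'⟩
  rcases lt_or_gt_of_ne hhb with hlt | hgt
  · -- h b < b : then h b ∈ (c, b) ⊆ psupp G, contradiction
    have h1 : c < h b := by
      have := (hH h hh) hcb
      rwa [hhc] at this
    have : h b ∈ psupp G := connectedComponentIn_subset _ _ (hIoo ⟨h1, hlt⟩)
    exact mapsCompl hcomm hh hbSG this
  · -- b < h b : then h⁻¹ b ∈ (c, b)
    have hinv : h⁻¹ ∈ H := inv_mem hh
    have hmono := hH h⁻¹ hinv
    have h2 : h⁻¹ b < b := by
      have := hmono hgt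
      simpa using this
    have hinvc : h⁻¹ c = c := by
      conv_lhs => rw [← hhc]
      simp
    have h1 : c < h⁻¹ b := by
      have := hmono hcb
      rwa [hinvc] at this
    have : h⁻¹ b ∈ psupp G := connectedComponentIn_subset _ _ (hIoo ⟨h1, h2⟩)
    exact mapsCompl hcomm hinv hbSG this

/-- If `G` and `H` are elementwise-commuting subgroups of the group of
orientation-preserving homeomorphisms of `ℝ` (here: strictly increasing
permutations of `ℝ`), then any connected component `I` of the support of `G`
and any connected component `J` of the support of `H` are not linked: either
one interior is contained in the other, or the interiors are disjoint. -/
theorem stmt_6 (G H : Subgroup (Equiv.Perm ℝ))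
    (hG : ∀ g ∈ G, StrictMono ⇑(g : Equiv.Perm ℝ))
    (hH : ∀ h ∈ H, StrictMono ⇑(h : Equiv.Perm ℝ))
    (hcomm : ∀ g ∈ G, ∀ h ∈ H, Commute g h)
    (x y : ℝ)
    (hx : x ∈ {p : ℝ | ∃ g ∈ G, (g : Equiv.Perm ℝ) p ≠ p})
    (hy : y ∈ {p : ℝ | ∃ h ∈ H, (h : Equiv.Perm ℝ) p ≠ p})
    (I J : Set ℝ)
    (hI : I = connectedComponentIn {p : ℝ | ∃ g ∈ G, (g : Equiv.Perm ℝ) p ≠ p} x)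
    (hJ : J = connectedComponentIn {p : ℝ | ∃ h ∈ H, (h : Equiv.Perm ℝ) p ≠ p} y) :
    interior I ⊆ interior J ∨ interior J ⊆ interior I ∨ interior I ∩ interior J = ∅ := by
  have hI' : I = connectedComponentIn (psupp G) x := hI
  have hJ' : J = connectedComponentIn (psupp H) y := hJ
  have hIopen : IsOpen I := hI' ▸ (psupp_open G hG).connectedComponentIn
  have hJopen : IsOpen J := hJ' ▸ (psupp_open H hH).connectedComponentIn
  rw [hIopen.interior_eq, hJopen.interior_eq]
  by_contra hcon
  push_neg at hcon
  obtain ⟨hIJ, hJI, hne⟩ := hcon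
  obtain ⟨u, huI, huJ⟩ := not_subset.mp hIJ
  obtain ⟨v, hvJ, hvI⟩ := not_subset.mp hJI
  obtain ⟨z, hzI, hzJ⟩ := hne
  have hIconn : IsPreconnected I := by rw [hI']; exact isPreconnected_connectedComponentIn
  have hJconn : IsPreconnected J := by rw [hJ']; exact isPreconnected_connectedComponentIn
  have hIord : OrdConnected I := hIconn.ordConnected
  have hJord : OrdConnected J := hJconn.ordConnected
  have huz : u ≠ z := fun h => huJ (h ▸ hzJ)
  have hvz : v ≠ z := fun h => hvI (h ▸ hzI)
  rcases lt_or_gt_of_ne huz with hu1 | hu1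
  · rcases lt_or_gt_of_ne hvz with hv1 | hv1
    · -- u < z, v < z : compare u and v
      rcases lt_trichotomy u v with h | h | h
      · exact hvI (hIord.out huI hzI ⟨h.le, hv1.le⟩)
      · exact hvI (h ▸ huI)
      · exact huJ (hJord.out hvJ hzJ ⟨h.le, hu1.le⟩)
    · exact key hG hH hcomm hI' hJ' ⟨huI, huJ⟩ ⟨hzI, hzJ⟩ ⟨hvJ, hvI⟩ hu1 hv1
  · rcases lt_or_gt_of_ne hvz with hv1 | hv1
    · exact key hH hG (fun h hh g hg => (hcomm g hg h hh).symm) hJ' hI'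
        ⟨hvJ, hvI⟩ ⟨hzJ, hzI⟩ ⟨huI, huJ⟩ hv1 hu1
    · rcases lt_trichotomy u v with h | h | h
      · exact huJ (hJord.out hzJ hvJ ⟨hu1.le, h.le⟩)
      · exact hvI (h ▸ huI)
      · exact hvI (hIord.out hzI huI ⟨hv1.le, h.le⟩)
end

section
/- Let G be a group acting on ℝ by orientation-preserving homeomorphisms such that every G-orbit is dense in ℝ (a minimal action), and let H be another such minimal action of G on ℝ. If h : ℝ → ℝ is a non-decreasing G-equivariant map (intertwining the two actions) which is surjective, then h is a homeomorphism; in particular the two actions are conjugate. -/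
/-- If `ρ₁, ρ₂` are minimal actions of a group `G` on `ℝ` by
orientation-preserving homeomorphisms and `h : ℝ → ℝ` is a non-decreasing
surjective `G`-equivariant map from `ρ₁` to `ρ₂`, then `h` is a homeomorphism
(a strictly increasing continuous bijection); in particular the two actions
are conjugate. -/
theorem stmt_8 (G : Type*) [Group G] (ρ₁ ρ₂ : G →* Equiv.Perm ℝ)
    (h₁mono : ∀ g : G, StrictMono ⇑(ρ₁ g)) (h₂mono : ∀ g : G, StrictMono ⇑(ρ₂ g))
    (hmin₁ : ∀ x : ℝ, Dense {y : ℝ | ∃ g : G, ρ₁ g x = y})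
    (hmin₂ : ∀ x : ℝ, Dense {y : ℝ | ∃ g : G, ρ₂ g x = y})
    (h : ℝ → ℝ) (hmono : Monotone h) (hsurj : Function.Surjective h)
    (hequiv : ∀ (g : G) (x : ℝ), h (ρ₁ g x) = ρ₂ g (h x)) :
    StrictMono h ∧ Continuous h ∧ Function.Bijective h := by
  have hcont : Continuous h := hmono.continuous_of_surjective hsurj
  -- key: injectivity
  have hinj : Function.Injective h := by
    intro a b hab
    by_contra hne
    -- wlog a < b
    wlog hlt : a < b generalizing a b
    · exact this hab.symm (Ne.symm hne) (lt_of_le_of_ne (not_lt.mp hlt) (Ne.symm hne))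
    set c := h a with hc
    set I : Set ℝ := h ⁻¹' {c} with hI
    have haI : a ∈ I := rfl
    -- I is bounded below
    obtain ⟨x0, hx0⟩ := hsurj (c - 1)
    have hbdd : x0 ∈ lowerBounds I := by
      intro y hy
      by_contra hyx
      have : h y ≤ h x0 := hmono (le_of_not_ge (fun hh => hyx hh))
      rw [hx0, Set.mem_preimage, Set.mem_singleton_iff] at *
      rw [hy] at this; linarith
    set p := sInf I with hp
    have hIclosed : IsClosed I := (isClosed_singleton).preimage hcont
    have hpI : p ∈ I := hIclosed.csInf_mem ⟨a, haI⟩ ⟨x0, hbdd⟩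
    have hpc : h p = c := hpI
    have hpa : p ≤ a := csInf_le ⟨x0, hbdd⟩ haI
    have hpb : p < b := lt_of_le_of_lt hpa hlt
    -- orbit of p meets (p, b)
    obtain ⟨y, ⟨g, hg⟩, hyo⟩ := (hmin₁ p).exists_mem_open isOpen_Ioo
      (Set.nonempty_Ioo.mpr hpb)
    rw [Set.mem_Ioo] at hyo
    -- h (ρ₁ g p) = c
    have h1 : h (ρ₁ g p) = c := by
      rw [hg]
      have h1 : c ≤ h y := hpc ▸ hmono hyo.1.le
      have h2 : h y ≤ c := by
        have := hmono hyo.2.le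
        rwa [← hab] at this
      linarith
    -- so ρ₂ g c = c
    have hfix : ρ₂ g c = c := by
      have h2 := hequiv g p
      rw [hpc] at h2
      rw [← h2, h1]
    have hfix' : ρ₂ g⁻¹ c = c := by
      conv_lhs => rw [← hfix]
      have : ρ₂ g⁻¹ (ρ₂ g c) = ρ₂ (g⁻¹ * g) c := by rw [map_mul]; rfl
      rw [this, inv_mul_cancel, map_one]; rfl
    -- ρ₁ g⁻¹ p ∈ I, hence p ≤ ρ₁ g⁻¹ p, hence ρ₁ g p ≤ p
    have hmem : ρ₁ g⁻¹ p ∈ I := by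
      show h (ρ₁ g⁻¹ p) = c
      rw [hequiv, hpc, hfix']
    have hle : p ≤ ρ₁ g⁻¹ p := csInf_le ⟨x0, hbdd⟩ hmem
    have : ρ₁ g p ≤ ρ₁ g (ρ₁ g⁻¹ p) := (h₁mono g).monotone hle
    have heq : ρ₁ g (ρ₁ g⁻¹ p) = p := by
      have : ρ₁ g (ρ₁ g⁻¹ p) = ρ₁ (g * g⁻¹) p := by rw [map_mul]; rfl
      rw [this, mul_inv_cancel, map_one]; rfl
    rw [heq, hg] at this
    exact absurd this (not_le.mpr hyo.1)
  exact ⟨hmono.strictMono_of_injective hinj, hcont, hinj, hsurj⟩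
end
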